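/- The following identities hold in F: x₄x₅·D = x₂²·A + x₃x₆, x₁x₅·D = x₃²·B + x₂x₆, x₁x₄·D = x₆²·C + x₂x₃, x₃x₆·E = x₁²·A + x₄x₅, x₂x₆·E = x₄²·B + x₁x₅, and x₂x₃·E = x₅²·C + x₁x₄. -/
import Mathlib


noncomputable section

open MvPolynomial

/-- The field `F = ℚ(x₁,…,x₆)` of rational functions in six indeterminates over `ℚ`. -/
abbrev F : Type := FractionRing (MvPolynomial (Fin 6) ℚ)

/-- The indeterminate `x_{r+1}` as an element of `F` (so `x 0 = x₁, …, x 5 = x₆`). -/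
def x (r : Fin 6) : F := algebraMap (MvPolynomial (Fin 6) ℚ) F (X r)

/-- `A = (x₃x₅+x₄x₆)/(x₁x₂)` -/
def A : F := (x 2 * x 4 + x 3 * x 5) / (x 0 * x 1)

/-- `B = (x₁x₆+x₂x₅)/(x₃x₄)` -/
def B : F := (x 0 * x 5 + x 1 * x 4) / (x 2 * x 3)

/-- `C = (x₁x₃+x₂x₄)/(x₅x₆)` -/
def C : F := (x 0 * x 2 + x 1 * x 3) / (x 4 * x 5)

/-- `D = (x₁x₃x₆+x₂x₃x₅+x₂x₄x₆)/(x₁x₄x₅)` -/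
def D : F := (x 0 * x 2 * x 5 + x 1 * x 2 * x 4 + x 1 * x 3 * x 5) / (x 0 * x 3 * x 4)

/-- `E = (x₂x₄x₅+x₁x₃x₅+x₁x₄x₆)/(x₂x₃x₆)` -/
def E : F := (x 1 * x 3 * x 4 + x 0 * x 2 * x 4 + x 0 * x 3 * x 5) / (x 1 * x 2 * x 5)

/-- `a(i,j) = i² + ij + j² + 1 + i + 2j` -/
def a (i j : ℤ) : ℤ := i^2 + i*j + j^2 + 1 + i + 2*j

/-- `b(i,j) = i² + ij + j² + 1 + 2i + j` -/
def b (i j : ℤ) : ℤ := i^2 + i*j + j^2 + 1 + 2*i + j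

/-- `c(i,j) = i² + ij + j² + 1` -/
def c (i j : ℤ) : ℤ := i^2 + i*j + j^2 + 1

/-- The initial cluster variable `x_{r(i,j,k)}` determined by `2(i−j)+3k mod 6`:
`r = 1` if `≡ 5`, `r = 2` if `≡ 2`, `r = 3` if `≡ 4`, `r = 4` if `≡ 1`,
`r = 5` if `≡ 3`, and `r = 6` if `≡ 0 (mod 6)`. -/
def xr (i j k : ℤ) : F :=
  if (2*(i-j) + 3*k) % 6 = 5 then x 0
  else if (2*(i-j) + 3*k) % 6 = 2 then x 1
  else if (2*(i-j) + 3*k) % 6 = 4 then x 2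
  else if (2*(i-j) + 3*k) % 6 = 1 then x 3
  else if (2*(i-j) + 3*k) % 6 = 3 then x 4
  else x 5

/-- `Z(i,j,k) = x_{r(i,j,k)} · A^{⌊a(i,j)/3⌋} · B^{⌊b(i,j)/3⌋} · C^{⌊c(i,j)/3⌋} ·
D^{⌊(k−1)²/4⌋} · E^{⌊k²/4⌋}`.  (Note `Int` division by a positive integer is floor
division.) -/
def Z (i j k : ℤ) : F :=
  xr i j k * A ^ (a i j / 3) * B ^ (b i j / 3) * C ^ (c i j / 3)
    * D ^ ((k-1)^2 / 4) * E ^ (k^2 / 4)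

lemma x_ne (r : Fin 6) : x r ≠ 0 := by
  simp only [x]
  exact fun h => X_ne_zero r ((map_eq_zero_iff _ (IsFractionRing.injective _ _)).mp h)

/-- The six identities relating `D` and `E` to `A`, `B`, `C` in `F`:
`x₄x₅·D = x₂²·A + x₃x₆`, `x₁x₅·D = x₃²·B + x₂x₆`, `x₁x₄·D = x₆²·C + x₂x₃`,
`x₃x₆·E = x₁²·A + x₄x₅`, `x₂x₆·E = x₄²·B + x₁x₅`, `x₂x₃·E = x₅²·C + x₁x₄`. -/
theorem stmt_18 :
    x 3 * x 4 * D = (x 1)^2 * A + x 2 * x 5 ∧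
    x 0 * x 4 * D = (x 2)^2 * B + x 1 * x 5 ∧
    x 0 * x 3 * D = (x 5)^2 * C + x 1 * x 2 ∧
    x 2 * x 5 * E = (x 0)^2 * A + x 3 * x 4 ∧
    x 1 * x 5 * E = (x 3)^2 * B + x 0 * x 4 ∧
    x 1 * x 2 * E = (x 4)^2 * C + x 0 * x 3 := by
  refine ⟨?_, ?_, ?_, ?_, ?_, ?_⟩ <;>
    simp only [_root_.A, _root_.B, _root_.C, D, E] <;>
    field_simp [x_ne 0, x_ne 1, x_ne 2, x_ne 3, x_ne 4, x_ne 5] <;> ring
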